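/- arXiv:2203.06466 — 2 statements merged into one kernel-verified Lean document; each statement's English description precedes it below -/
import Mathlib

section
/- Let G be a graph with an (F2, F)-partition (V1, V2) and let v be a vertex not in G whose attachment creates graph G' where v has exactly three neighbors, each of which either lies in V2 or lies in V1 with at most one V1-neighbor. If at least two neighbors of v are in V2, or the (at most one) neighbor of v in V1 is not V1-saturated, then G' has an (F2, F)-partition. -/
/-!
The new vertex `v` joins `V1`. It has at most one neighbour in `V1` (by counting, if two of its
three neighbours lie in `V2`), so it lies on no cycle of `G'[V1 ∪ {v}]`, since a vertex of a cycle
has two neighbours on it; every other cycle there was already a cycle of `G'[V1]`. The degree of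
`v` in `V1 ∪ {v}` is at most one, and its `V1`-neighbour had at most one `V1`-neighbour before,
hence at most two afterwards.
-/

open SimpleGraph

/-- `G` contains no cycle of length `n`. -/
def NoCycleLen {V : Type} (G : SimpleGraph V) (n : ℕ) : Prop :=
  ∀ (v : V) (w : G.Walk v v), w.IsCycle → w.length ≠ n

/-- `(V1, V2)` partitions the vertex subset `s`, with `G[V1]` a forest of maximum
degree at most 2 and `G[V2]` a forest. -/
def IsF2FPartOn {V : Type} (G : SimpleGraph V) (s V1 V2 : Set V) : Prop :=
  V1 ∪ V2 = s ∧ Disjoint V1 V2 ∧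
  (G.induce V1).IsAcyclic ∧
  (∀ x : V1, ((G.induce V1).neighborSet x).ncard ≤ 2) ∧
  (G.induce V2).IsAcyclic

namespace SimpleGraph

variable {V : Type} {G : SimpleGraph V}

theorem ncard_neighborSet_induce (s : Set V) {x : V} (hx : x ∈ s) :
    ((G.induce s).neighborSet ⟨x, hx⟩).ncard = (G.neighborSet x ∩ s).ncard := by
  rw [neighborSet_induce, ← Set.ncard_image_of_injective _ Subtype.val_injective,
    Subtype.image_preimage_coe, Set.inter_comm]

theorem IsAcyclic.induce_insert {s : Set V} {v : V} (hs : (G.induce s).IsAcyclic)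
    (hv : (G.neighborSet v ∩ s).Subsingleton) : (G.induce (insert v s)).IsAcyclic := by
  intro x c hc
  set c' := c.map (Embedding.induce (insert v s)).toHom
  have hc' : c'.IsCycle := hc.map (Embedding.induce (G := G) _).injective
  have hsupp : ∀ y ∈ c'.support, y ∈ insert v s := by
    simp only [c', Walk.support_map, List.mem_map]
    rintro _ ⟨z, -, rfl⟩
    exact z.2
  by_cases hvc : v ∈ c'.support
  · have hnbr : c'.toSubgraph.neighborSet v ⊆ G.neighborSet v ∩ s := by
      intro y hy
      have hadj : G.Adj v y := c'.toSubgraph.adj_sub hy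
      have hy : y ∈ c'.support := c'.mem_verts_toSubgraph.mp (c'.toSubgraph.edge_vert hy.symm)
      exact ⟨hadj, (hsupp y hy).resolve_left hadj.ne'⟩
    obtain ⟨a, b, hab, hnb⟩ := Set.ncard_eq_two.mp (hc'.ncard_neighborSet_toSubgraph_eq_two hvc)
    rw [hnb] at hnbr
    exact hab (hv (hnbr (Set.mem_insert a {b})) (hnbr (Set.mem_insert_of_mem a rfl)))
  · have hs' : ∀ y ∈ c'.support, y ∈ s := fun y hy =>
      (hsupp y hy).resolve_left (by rintro rfl; exact hvc hy)
    refine hs (c'.induce s hs') ?_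
    rw [← Walk.isCycle_map_iff_of_injective (f := (Embedding.induce (G := G) s).toHom)
      (Embedding.induce (G := G) s).injective, Walk.map_induce]
    exact hc'

end SimpleGraph

theorem IsF2FPartOn.insert_left {V : Type} {G : SimpleGraph V} {s V1 V2 : Set V} {v : V}
    (h : IsF2FPartOn G s V1 V2) (hvs : v ∉ s) (hv : (G.neighborSet v ∩ V1).Subsingleton)
    (hunsat : ∀ u ∈ G.neighborSet v ∩ V1, (G.neighborSet u ∩ V1).ncard ≤ 1) :
    IsF2FPartOn G (insert v s) (insert v V1) V2 := by
  obtain ⟨hU, hdisj, hac1, hdeg1, hac2⟩ := h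
  refine ⟨by rw [Set.insert_union, hU], ?_, hac1.induce_insert hv, ?_, hac2⟩
  · exact Set.disjoint_insert_left.mpr ⟨fun hv2 => hvs (hU ▸ Or.inr hv2), hdisj⟩
  rintro ⟨x, hx⟩
  rw [ncard_neighborSet_induce _ hx]
  obtain rfl | hx1 := hx
  · rw [Set.inter_insert_of_notMem (show x ∉ G.neighborSet x from G.irrefl)]
    exact ((Set.ncard_le_one hv.finite).mpr hv).trans (by norm_num)
  by_cases hxv : G.Adj x v
  · rw [Set.inter_insert_of_mem (show v ∈ G.neighborSet x from hxv)]
    have := hunsat x ⟨hxv.symm, hx1⟩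
    exact (Set.ncard_insert_le _ _).trans (by omega)
  · rw [Set.inter_insert_of_notMem (show v ∉ G.neighborSet x from hxv),
      ← ncard_neighborSet_induce _ hx1]
    exact hdeg1 ⟨x, hx1⟩

theorem attach_degree_three_vertex_general {V : Type} [Fintype V]
    (G' : SimpleGraph V) [DecidableRel G'.Adj] (v : V)
    (hdeg : G'.degree v = 3)
    (V1 V2 : Set V) (hpart : IsF2FPartOn G' ({v}ᶜ : Set V) V1 V2)
    (hnbr : ∀ u ∈ G'.neighborSet v,
      u ∈ V2 ∨ (u ∈ V1 ∧ (G'.neighborSet u ∩ V1).ncard ≤ 1))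
    (hcond : 2 ≤ (G'.neighborSet v ∩ V2).ncard ∨
      ((G'.neighborSet v ∩ V1).ncard ≤ 1 ∧
        ∀ u ∈ G'.neighborSet v ∩ V1, (G'.neighborSet u ∩ V1).ncard ≤ 1)) :
    ∃ W1 W2 : Set V, IsF2FPartOn G' Set.univ W1 W2 := by
  have hdisj : Disjoint V1 V2 := hpart.2.1
  have hv1 : (G'.neighborSet v ∩ V1).Subsingleton := by
    rw [← Set.ncard_le_one_iff_subsingleton]
    rcases hcond with hV2 | ⟨hV1, -⟩
    · have hN : (G'.neighborSet v).ncard = 3 := by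
        rw [← coe_neighborFinset, Set.ncard_coe_finset, card_neighborFinset_eq_degree, hdeg]
      have hV2_le : (G'.neighborSet v ∩ V2).ncard ≤ (G'.neighborSet v \ V1).ncard :=
        Set.ncard_le_ncard fun u hu => ⟨hu.1, hdisj.notMem_of_mem_right hu.2⟩
      have := Set.ncard_inter_add_ncard_sdiff_eq_ncard (G'.neighborSet v) V1
      omega
    · exact hV1
  refine ⟨insert v V1, V2, ?_⟩
  rw [← Set.union_compl_self {v}, ← Set.insert_eq]
  refine hpart.insert_left (fun h => h rfl) hv1 fun u hu => ?_
  exact ((hnbr u hu.1).resolve_left (hdisj.notMem_of_mem_left hu.2)).2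

theorem attach_degree_three_vertex {V : Type} [Fintype V] [DecidableEq V]
    (G' : SimpleGraph V) [DecidableRel G'.Adj] (v : V)
    (hdeg : G'.degree v = 3)
    (V1 V2 : Set V) (hpart : IsF2FPartOn G' ({v}ᶜ : Set V) V1 V2)
    (hnbr : ∀ u ∈ G'.neighborSet v,
      u ∈ V2 ∨ (u ∈ V1 ∧ (G'.neighborSet u ∩ V1).ncard ≤ 1))
    (hcond : 2 ≤ (G'.neighborSet v ∩ V2).ncard ∨
      ((G'.neighborSet v ∩ V1).ncard ≤ 1 ∧
        ∀ u ∈ G'.neighborSet v ∩ V1, (G'.neighborSet u ∩ V1).ncard ≤ 1)) :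
    ∃ W1 W2 : Set V, IsF2FPartOn G' Set.univ W1 W2 :=
  attach_degree_three_vertex_general G' v hdeg V1 V2 hpart hnbr hcond
end

section
/- Let G be a vertex-minimal planar graph without 4-cycles and 6-cycles having no (F2, F)-partition, embedded in the plane. Then no vertex of degree 5 is incident to a poor 3-face. -/
open SimpleGraph

/-- A combinatorial plane embedding of `G`: a finite set of faces, each with a closed
boundary walk, satisfying the handshaking identity for faces and Euler's formula. -/
structure PlaneEmbedding {V : Type} [Fintype V] [DecidableEq V]
    (G : SimpleGraph V) [DecidableRel G.Adj] : Type 1 where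
  Face : Type
  faceFintype : Fintype Face
  boundary : Face → List V
  boundary_ne : ∀ f, boundary f ≠ []
  boundary_walk : ∀ f, (boundary f ++ (boundary f).take 1).Chain' G.Adj
  edge_count : ∑ f ∈ (@Finset.univ Face faceFintype), (boundary f).length
      = 2 * G.edgeFinset.card
  euler : (Fintype.card V : ℤ) - G.edgeFinset.card + (@Fintype.card Face faceFintype) = 2

/-- `G` is planar: it admits a plane embedding. -/
def SimpleGraph.Planar {V : Type} [Fintype V] [DecidableEq V]
    (G : SimpleGraph V) [DecidableRel G.Adj] : Prop :=
  Nonempty (PlaneEmbedding G)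

namespace PlaneEmbedding

variable {V : Type} [Fintype V] [DecidableEq V] {G : SimpleGraph V} [DecidableRel G.Adj]

/-- The length of the boundary walk of a face. -/
def faceLen (E : PlaneEmbedding G) (f : E.Face) : ℕ := (E.boundary f).length

/-- A vertex is incident to a face if it lies on the boundary walk. -/
def IncidentVF (E : PlaneEmbedding G) (v : V) (f : E.Face) : Prop := v ∈ E.boundary f

/-- The edges of the boundary walk of a face (cyclically consecutive pairs). -/
def faceEdges (E : PlaneEmbedding G) (f : E.Face) : List (Sym2 V) :=
  ((E.boundary f).zip ((E.boundary f).rotate 1)).map fun p => s(p.1, p.2)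

/-- Two faces are adjacent if they are distinct and share an edge. -/
def FacesAdj (E : PlaneEmbedding G) (f g : E.Face) : Prop :=
  f ≠ g ∧ ∃ e, e ∈ E.faceEdges f ∧ e ∈ E.faceEdges g

/-- `n_i(v)`: the number of faces of length `i` incident to `v`. -/
noncomputable def nIncident (E : PlaneEmbedding G) (i : ℕ) (v : V) : ℕ :=
  {f : E.Face | E.faceLen f = i ∧ E.IncidentVF v f}.ncard

/-- `m_i(v)`: the number of pendent `i`-faces of `v`, i.e. faces of length `i` not
incident to `v` but incident to a 3-vertex adjacent to `v`. -/
noncomputable def mPendent (E : PlaneEmbedding G) (i : ℕ) (v : V) : ℕ :=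
  {f : E.Face | E.faceLen f = i ∧ ¬ E.IncidentVF v f ∧
    ∃ u, G.Adj v u ∧ G.degree u = 3 ∧ E.IncidentVF u f}.ncard

/-- A terrible 3-vertex of a face `f`: a 3-vertex on `f` with a neighbor of degree
at most 4 not on `f`. -/
def Terrible (E : PlaneEmbedding G) (f : E.Face) (u : V) : Prop :=
  G.degree u = 3 ∧ E.IncidentVF u f ∧
    ∃ w, G.Adj u w ∧ ¬ E.IncidentVF w f ∧ G.degree w ≤ 4

/-- A poor 3-face: a 3-face incident to two terrible 3-vertices. -/
def PoorFace (E : PlaneEmbedding G) (f : E.Face) : Prop :=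
  E.faceLen f = 3 ∧ ∃ u₁ u₂, u₁ ≠ u₂ ∧ E.Terrible f u₁ ∧ E.Terrible f u₂

end PlaneEmbedding

/-!
Let `v` (degree 5) lie on a poor triangle `v u₁ u₂`, the terrible 3-vertices `uᵢ` having pendent
neighbours `wᵢ` of degree at most 4; since there is no 4-cycle, `u₂` is not adjacent to `w₁`. By
minimality `G - {u₁, u₂}` has a partition `(A, B)`, `A` inducing a forest of maximum degree 2 and
`B` a forest, and we extend it to `G`. A vertex with at most one neighbour in a forest can always
be added to it as a leaf, and a vertex whose neighbours in a forest lie in different components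
can be added without creating a cycle.

If `v ∈ A` and `w₁, w₂` are not joined in `B`, both `uᵢ` go to `B`. If they are joined in `B` and
`v` has at most one neighbour in `A`, then `u₁` becomes a leaf of `A` at `v` and `u₂` a leaf of
`B` at `w₂`; otherwise `v` has at most one neighbour in `B`, moves there, and `u₁ u₂` becomes an
isolated edge of `A`.

If `v ∈ B`, first move each `wᵢ` with two neighbours in `A` to `B`, where it has at most one
neighbour. If now `w₁, w₂` are joined in `A`, then `u₁` becomes a leaf of `A` at `w₁` and `u₂` a
leaf of `B` at `v`; otherwise the path `w₁ u₁ u₂ w₂` is added to `A`.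
-/

namespace SimpleGraph

variable {V : Type} {G : SimpleGraph V} {S T : Set V} {a b c r x : V}

variable (G) in
def IsAcyclicOn (S : Set V) : Prop :=
  ∀ ⦃x : V⦄ (c : G.Walk x x), c.IsCycle → ¬ ∀ z ∈ c.support, z ∈ S

variable (G) in
def ReachableIn (S : Set V) (x y : V) : Prop :=
  ∃ w : G.Walk x y, ∀ z ∈ w.support, z ∈ S

variable (G) in
noncomputable def degreeIn (S : Set V) (x : V) : ℕ :=
  (G.neighborSet x ∩ S).ncard

theorem isAcyclic_induce_iff : (G.induce S).IsAcyclic ↔ G.IsAcyclicOn S := by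
  refine ⟨fun h x c hc hS => h (c.induce S hS) ?_, fun h x c hc =>
    h _ (hc.map (f := (Embedding.induce S).toHom) Subtype.val_injective) ?_⟩
  · rwa [← Walk.isCycle_map_iff_of_injective (f := (Embedding.induce S).toHom)
      Subtype.val_injective, Walk.map_induce]
  · intro z hz
    rw [Walk.support_map, List.mem_map] at hz
    obtain ⟨z', -, rfl⟩ := hz
    exact z'.2

theorem IsAcyclicOn.mono (h : G.IsAcyclicOn T) (hST : S ⊆ T) : G.IsAcyclicOn S :=
  fun _ c hc hS => h c hc fun z hz => hST (hS z hz)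

theorem IsAcyclicOn.image_val {s : Set V} {W : Set s} (h : (G.induce s).IsAcyclicOn W) :
    G.IsAcyclicOn (Subtype.val '' W) := by
  intro x c hc hW
  have hs : ∀ z ∈ c.support, z ∈ s := fun z hz => by
    obtain ⟨z', -, rfl⟩ := hW z hz
    exact z'.2
  refine h (c.induce s hs) ?_ fun z hz => ?_
  · rwa [← Walk.isCycle_map_iff_of_injective (f := (Embedding.induce s).toHom)
      Subtype.val_injective, Walk.map_induce]
  · rw [Walk.support_induce, List.mem_attachWith] at hz
    obtain ⟨z', hz', hzz⟩ := hW z hz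
    rwa [← Subtype.ext hzz]

theorem ReachableIn.start_mem {y : V} (h : G.ReachableIn S x y) : x ∈ S :=
  h.elim fun w hw => hw x w.start_mem_support

theorem ReachableIn.end_mem {y : V} (h : G.ReachableIn S x y) : y ∈ S :=
  h.elim fun w hw => hw y w.end_mem_support

theorem ReachableIn.symm {y : V} (h : G.ReachableIn S x y) : G.ReachableIn S y x :=
  h.elim fun w hw =>
    ⟨w.reverse, fun z hz => hw z (by rwa [Walk.support_reverse, List.mem_reverse] at hz)⟩

theorem Walk.IsCycle.exists_walk_between_neighbors {c : G.Walk a a} (hc : c.IsCycle) :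
    ∃ b q, b ≠ q ∧ G.Adj a b ∧ G.Adj a q ∧
      ∃ e : G.Walk q b, a ∉ e.support ∧ ∀ z ∈ e.support, z ∈ c.support := by
  cases c with
  | nil => exact absurd rfl hc.ne_nil
  | @cons _ b _ hab p =>
    rw [Walk.cons_isCycle_iff] at hc
    obtain ⟨q, haq, e, he⟩ := Walk.exists_eq_cons_of_ne hab.ne p.reverse
    have hpath := hc.1.reverse
    rw [he, Walk.cons_isPath_iff] at hpath
    refine ⟨b, q, ?_, hab, haq, e, hpath.2, fun z hz => ?_⟩
    · rintro rfl
      apply hc.2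
      have : s(a, b) ∈ p.reverse.edges := by rw [he, Walk.edges_cons]; exact List.mem_cons_self
      rwa [Walk.edges_reverse, List.mem_reverse] at this
    · have : z ∈ p.reverse.support := by rw [he, Walk.support_cons]; exact List.mem_cons_of_mem _ hz
      rw [Walk.support_reverse, List.mem_reverse] at this
      exact List.mem_cons_of_mem _ this

theorem IsAcyclicOn.insert (hS : G.IsAcyclicOn S)
    (h : (G.neighborSet a ∩ S).Pairwise fun p q => ¬ G.ReachableIn S p q) :
    G.IsAcyclicOn (insert a S) := by
  classical
  intro x c hc hcS
  by_cases ha : a ∈ c.support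
  · obtain ⟨b, q, hbq, hab, haq, e, hae, he⟩ := (hc.rotate ha).exists_walk_between_neighbors
    have heS : ∀ z ∈ e.support, z ∈ S := fun z hz =>
      (hcS z ((Walk.mem_support_rotate_iff _ _ _).1 (he z hz))).resolve_left
        (ne_of_mem_of_not_mem hz hae)
    exact h ⟨haq, heS _ e.start_mem_support⟩ ⟨hab, heS _ e.end_mem_support⟩ hbq.symm ⟨e, heS⟩
  · exact hS c hc fun z hz => (hcS z hz).resolve_left (ne_of_mem_of_not_mem hz ha)

theorem ReachableIn.of_insert (hsub : G.neighborSet a ∩ S ⊆ {c}) (hr : r ≠ a)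
    (h : G.ReachableIn (insert a S) a r) : G.ReachableIn S c r := by
  classical
  obtain ⟨w, hw⟩ := h
  obtain ⟨y, hay, e, he⟩ := Walk.exists_eq_cons_of_ne hr.symm w.bypass
  have hpath := w.bypass_isPath
  rw [he, Walk.cons_isPath_iff] at hpath
  have heS : ∀ z ∈ e.support, z ∈ S := fun z hz => by
    have hzw : z ∈ w.bypass.support := by
      rw [he, Walk.support_cons]
      exact List.mem_cons_of_mem _ hz
    exact (hw z (w.support_bypass_subset_support hzw)).resolve_left
      (ne_of_mem_of_not_mem hz hpath.2)
  obtain rfl : y = c := hsub ⟨hay, heS _ e.start_mem_support⟩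
  exact ⟨e, heS⟩

theorem degreeIn_insert_of_not_adj (h : ¬ G.Adj x a) :
    G.degreeIn (insert a S) x = G.degreeIn S x := by
  unfold degreeIn
  rw [Set.inter_insert_of_notMem (s := G.neighborSet x) h]

theorem ncard_neighborSet_induce_s10 (x : S) :
    ((G.induce S).neighborSet x).ncard = G.degreeIn S x := by
  rw [neighborSet_induce, ← Set.ncard_image_of_injective _ Subtype.val_injective,
    Subtype.image_preimage_coe, Set.inter_comm]
  rfl

theorem degreeIn_induce {W : Set S} (x : S) :
    (G.induce S).degreeIn W x = G.degreeIn (Subtype.val '' W) x := by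
  rw [degreeIn, degreeIn, ← Set.ncard_image_of_injective _ Subtype.val_injective,
    Set.image_inter Subtype.val_injective, neighborSet_induce, Subtype.image_preimage_coe,
    Set.inter_assoc, Set.inter_eq_right.2
      (Set.inter_subset_right.trans ((Set.image_subset_range _ _).trans Subtype.range_coe.le))]

theorem neighborSet_eq_of_degree_eq_three [Fintype (G.neighborSet x)]
    (hx : G.degree x = 3) (ha : G.Adj x a) (hb : G.Adj x b) (hc : G.Adj x c) (hab : a ≠ b)
    (hac : a ≠ c) (hbc : b ≠ c) : G.neighborSet x = {a, b, c} := by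
  refine (Set.eq_of_subset_of_ncard_le ?_ ?_).symm
  · rintro y (rfl | rfl | rfl) <;> assumption
  · rw [Set.ncard_eq_three.2 ⟨a, b, c, hab, hac, hbc, rfl⟩, ← Nat.card_coe_set_eq,
      Nat.card_eq_fintype_card, card_neighborSet_eq_degree, hx]

section degreeIn

variable [Finite V]

theorem degreeIn_mono (hST : S ⊆ T) : G.degreeIn S x ≤ G.degreeIn T x :=
  Set.ncard_le_ncard (Set.inter_subset_inter_right _ hST)

theorem degreeIn_insert_le : G.degreeIn (insert a S) x ≤ G.degreeIn S x + 1 := by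
  refine (Set.ncard_le_ncard ?_).trans (Set.ncard_insert_le a _)
  rintro y ⟨hy, rfl | hyS⟩
  exacts [Or.inl rfl, Or.inr ⟨hy, hyS⟩]

theorem degreeIn_union (hd : Disjoint S T) :
    G.degreeIn (S ∪ T) x = G.degreeIn S x + G.degreeIn T x := by
  unfold degreeIn
  rw [Set.inter_union_distrib_left]
  exact Set.ncard_union_eq (hd.mono Set.inter_subset_right Set.inter_subset_right)

theorem degreeIn_le_one_of_subset (h : G.neighborSet x ∩ S ⊆ {b}) : G.degreeIn S x ≤ 1 :=
  (Set.ncard_le_ncard h).trans (Set.ncard_singleton b).le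

theorem degreeIn_add_ncard_le_degree [Fintype (G.neighborSet x)] (hT : T ⊆ G.neighborSet x)
    (hST : Disjoint S T) : G.degreeIn S x + T.ncard ≤ G.degree x := by
  rw [degreeIn, ← Set.ncard_union_eq (hST.mono_left Set.inter_subset_right),
    ← card_neighborSet_eq_degree, ← Nat.card_eq_fintype_card, Nat.card_coe_set_eq]
  exact Set.ncard_le_ncard (Set.union_subset Set.inter_subset_left hT)

end degreeIn

end SimpleGraph

section

variable {V : Type} {G : SimpleGraph V} {S A B : Set V} {a b x w : V}

theorem isF2FPartOn_iff : IsF2FPartOn G S A B ↔ A ∪ B = S ∧ Disjoint A B ∧ G.IsAcyclicOn A ∧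
    (∀ x ∈ A, G.degreeIn A x ≤ 2) ∧ G.IsAcyclicOn B := by
  simp only [IsF2FPartOn, isAcyclic_induce_iff, ncard_neighborSet_induce_s10, Subtype.forall]

theorem IsF2FPartOn.image_val {s : Set V} {V₁ V₂ : Set s}
    (h : IsF2FPartOn (G.induce s) Set.univ V₁ V₂) :
    IsF2FPartOn G s (Subtype.val '' V₁) (Subtype.val '' V₂) := by
  rw [isF2FPartOn_iff] at h ⊢
  obtain ⟨hu, hd, hA, hdeg, hB⟩ := h
  refine ⟨by rw [← Set.image_union, hu, Set.image_univ, Subtype.range_coe],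
    (Set.disjoint_image_iff Subtype.val_injective).2 hd, hA.image_val, ?_, hB.image_val⟩
  rintro _ ⟨x, hx, rfl⟩
  rw [← degreeIn_induce]
  exact hdeg x hx

theorem IsF2FPartOn.left_subset (h : IsF2FPartOn G S A B) : A ⊆ S :=
  h.1 ▸ Set.subset_union_left

theorem IsF2FPartOn.right_subset (h : IsF2FPartOn G S A B) : B ⊆ S :=
  h.1 ▸ Set.subset_union_right

theorem IsF2FPartOn.degreeIn_add [Finite V] (h : IsF2FPartOn G S A B) (x : V) :
    G.degreeIn A x + G.degreeIn B x = G.degreeIn S x := by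
  rw [← degreeIn_union h.2.1, h.1]

theorem IsF2FPartOn.insert_right (h : IsF2FPartOn G S A B) (haA : a ∉ A)
    (hpair : (G.neighborSet a ∩ B).Pairwise fun p q => ¬ G.ReachableIn B p q) :
    IsF2FPartOn G (insert a S) A (insert a B) := by
  rw [isF2FPartOn_iff] at h ⊢
  obtain ⟨hu, hd, hA, hdeg, hB⟩ := h
  exact ⟨by rw [Set.union_insert, hu], Set.disjoint_insert_right.2 ⟨haA, hd⟩, hA, hdeg,
    hB.insert hpair⟩

theorem IsF2FPartOn.insert_left_s10 [Finite V] (h : IsF2FPartOn G S A B) (haB : a ∉ B)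
    (hcard : G.degreeIn A a ≤ 2)
    (hpair : (G.neighborSet a ∩ A).Pairwise fun p q => ¬ G.ReachableIn A p q)
    (hdeg : ∀ y ∈ G.neighborSet a ∩ A, G.degreeIn A y ≤ 1) :
    IsF2FPartOn G (insert a S) (insert a A) B := by
  rw [isF2FPartOn_iff] at h ⊢
  obtain ⟨hu, hd, hA, hdegA, hB⟩ := h
  refine ⟨by rw [Set.insert_union, hu], Set.disjoint_insert_left.2 ⟨haB, hd⟩, hA.insert hpair,
    ?_, hB⟩
  rintro y (rfl | hy)
  · rwa [degreeIn_insert_of_not_adj (G.loopless.irrefl _)]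
  by_cases hya : G.Adj y a
  · have := hdeg y ⟨hya.symm, hy⟩
    exact degreeIn_insert_le.trans (by omega)
  · rw [degreeIn_insert_of_not_adj hya]
    exact hdegA y hy

theorem IsF2FPartOn.insert_right_of_subset_singleton (h : IsF2FPartOn G S A B) (haA : a ∉ A)
    (hsub : G.neighborSet a ∩ B ⊆ {b}) : IsF2FPartOn G (insert a S) A (insert a B) :=
  h.insert_right haA ((Set.subsingleton_singleton.anti hsub).pairwise _)

theorem IsF2FPartOn.insert_left_of_subset_singleton [Finite V] (h : IsF2FPartOn G S A B)
    (haB : a ∉ B) (hsub : G.neighborSet a ∩ A ⊆ {b}) (hb : b ∈ A → G.degreeIn A b ≤ 1) :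
    IsF2FPartOn G (insert a S) (insert a A) B :=
  h.insert_left_s10 haB ((degreeIn_le_one_of_subset hsub).trans one_le_two)
    ((Set.subsingleton_singleton.anti hsub).pairwise _) fun y hy => by
      obtain rfl := hsub hy
      exact hb hy.2

theorem IsF2FPartOn.move_to_right [Finite V] (h : IsF2FPartOn G S A B) (hxA : x ∈ A)
    (hdeg : G.degreeIn B x ≤ 1) : IsF2FPartOn G S (A \ {x}) (insert x B) := by
  have hxB : x ∉ B := Set.disjoint_left.1 h.2.1 hxA
  have herase : IsF2FPartOn G (S \ {x}) (A \ {x}) B := by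
    rw [isF2FPartOn_iff] at h ⊢
    obtain ⟨hu, hd, hA, hdegA, hB⟩ := h
    exact ⟨by rw [← hu, Set.union_sdiff_distrib, Set.sdiff_singleton_eq_self hxB],
      hd.mono_left Set.sdiff_subset, hA.mono Set.sdiff_subset,
      fun y hy => (degreeIn_mono Set.sdiff_subset).trans (hdegA y hy.1), hB⟩
  have := herase.insert_right (fun hx => hx.2 rfl)
    ((Set.ncard_le_one_iff_subsingleton.1 hdeg).pairwise _)
  rwa [Set.insert_sdiff_singleton, Set.insert_eq_of_mem (h.left_subset hxA)] at this

theorem IsF2FPartOn.exists_degreeIn_le_one [Finite V] (h : IsF2FPartOn G S A B)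
    (hw : G.degreeIn S w ≤ 3) :
    ∃ A' B', IsF2FPartOn G S A' B' ∧ A' ⊆ A ∧ B ⊆ B' ∧ (w ∈ A' → G.degreeIn A' w ≤ 1) := by
  have hsum := h.degreeIn_add w
  by_cases hm : w ∈ A ∧ 2 ≤ G.degreeIn A w
  · exact ⟨_, _, h.move_to_right hm.1 (by omega), Set.sdiff_subset, Set.subset_insert _ _,
      fun hw' => absurd rfl hw'.2⟩
  · exact ⟨A, B, h, subset_rfl, subset_rfl, fun hwA => by have := not_and.1 hm hwA; omega⟩

section PoorTriangle

variable [Finite V] {u₁ u₂ v w₁ w₂ : V}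

theorem IsF2FPartOn.exists_insert_of_mem_left (h : IsF2FPartOn G S A B)
    (hN₁ : G.neighborSet u₁ ⊆ {v, u₂, w₁}) (hN₂ : G.neighborSet u₂ ⊆ {v, u₁, w₂})
    (hu₁ : u₁ ∉ S) (hu₂ : u₂ ∉ S) (hu : u₁ ≠ u₂) (hvA : v ∈ A) (hv : G.degreeIn S v ≤ 3) :
    ∃ A' B', IsF2FPartOn G (insert u₁ (insert u₂ S)) A' B' := by
  have hu₁A : u₁ ∉ A := fun h' => hu₁ (h.left_subset h')
  have hu₂A : u₂ ∉ A := fun h' => hu₂ (h.left_subset h')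
  have hu₁B : u₁ ∉ B := fun h' => hu₁ (h.right_subset h')
  have hu₂B : u₂ ∉ B := fun h' => hu₂ (h.right_subset h')
  have hvB : v ∉ B := Set.disjoint_left.1 h.2.1 hvA
  have hu₁v : u₁ ≠ v := (ne_of_mem_of_not_mem (h.left_subset hvA) hu₁).symm
  have hu₂v : u₂ ≠ v := (ne_of_mem_of_not_mem (h.left_subset hvA) hu₂).symm
  have hsub₂B : G.neighborSet u₂ ∩ B ⊆ {w₂} := by
    rintro y ⟨hy, hyB⟩
    rcases hN₂ hy with rfl | rfl | rfl <;> simp_all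
  by_cases hw : G.ReachableIn B w₁ w₂
  · have hw₁A : w₁ ∉ A := fun h' => Set.disjoint_left.1 h.2.1 h' hw.start_mem
    have hw₂A : w₂ ∉ A := fun h' => Set.disjoint_left.1 h.2.1 h' hw.end_mem
    by_cases hdv : G.degreeIn A v ≤ 1
    · have hsub₁ : G.neighborSet u₁ ∩ A ⊆ {v} := by
        rintro y ⟨hy, hyA⟩
        rcases hN₁ hy with rfl | rfl | rfl <;> simp_all
      have h₁ := h.insert_left_of_subset_singleton hu₁B hsub₁ fun _ => hdv
      refine ⟨_, _, Set.insert_comm u₁ u₂ S ▸ h₁.insert_right_of_subset_singleton ?_ hsub₂B⟩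
      rintro (rfl | h') <;> simp_all
    · have h' := h.move_to_right hvA (by have := h.degreeIn_add v; omega)
      have hsub₂ : G.neighborSet u₂ ∩ (A \ {v}) ⊆ {w₂} := by
        rintro y ⟨hy, hyA⟩
        rcases hN₂ hy with rfl | rfl | rfl <;> simp_all
      have h₂ := h'.insert_left_of_subset_singleton (by simp_all) hsub₂ fun hw₂ =>
        absurd hw₂.1 hw₂A
      refine ⟨_, _, h₂.insert_left_of_subset_singleton (b := u₂) (by simp_all) ?_ fun _ => ?_⟩
      · rintro y ⟨hy, hyA⟩
        rcases hN₁ hy with rfl | rfl | rfl <;> simp_all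
      · rw [degreeIn_insert_of_not_adj (G.loopless.irrefl _)]
        exact degreeIn_le_one_of_subset hsub₂
  · have h₂ := h.insert_right_of_subset_singleton hu₂A hsub₂B
    refine ⟨_, _, h₂.insert_right hu₁A (Set.Pairwise.mono (s := {u₂, w₁}) ?_
      (Set.pairwise_pair.2 fun hne => ⟨fun hr => ?_, fun hr => ?_⟩))⟩
    · rintro y ⟨hy, hyB⟩
      rcases hN₁ hy with rfl | rfl | rfl <;> simp_all
    · exact hw (hr.of_insert hsub₂B hne.symm).symm
    · exact hw (hr.symm.of_insert hsub₂B hne.symm).symm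

theorem IsF2FPartOn.exists_insert_of_mem_right (h : IsF2FPartOn G S A B)
    (hN₁ : G.neighborSet u₁ ⊆ {v, u₂, w₁}) (hN₂ : G.neighborSet u₂ ⊆ {v, u₁, w₂})
    (hu₁ : u₁ ∉ S) (hu₂ : u₂ ∉ S) (hu : u₁ ≠ u₂) (h₂₁ : ¬ G.Adj u₂ w₁) (hvB : v ∈ B)
    (hw₁ : w₁ ∈ A → G.degreeIn A w₁ ≤ 1) (hw₂ : w₂ ∈ A → G.degreeIn A w₂ ≤ 1) :
    ∃ A' B', IsF2FPartOn G (insert u₁ (insert u₂ S)) A' B' := by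
  have hu₁A : u₁ ∉ A := fun h' => hu₁ (h.left_subset h')
  have hu₂A : u₂ ∉ A := fun h' => hu₂ (h.left_subset h')
  have hu₁B : u₁ ∉ B := fun h' => hu₁ (h.right_subset h')
  have hu₂B : u₂ ∉ B := fun h' => hu₂ (h.right_subset h')
  have hvA : v ∉ A := fun h' => Set.disjoint_left.1 h.2.1 h' hvB
  have hu₂v : u₂ ≠ v := (ne_of_mem_of_not_mem (h.right_subset hvB) hu₂).symm
  have hsub₂ : G.neighborSet u₂ ∩ A ⊆ {w₂} := by
    rintro y ⟨hy, hyA⟩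
    rcases hN₂ hy with rfl | rfl | rfl <;> simp_all
  by_cases hw : G.ReachableIn A w₁ w₂
  · have hw₂B : w₂ ∉ B := Set.disjoint_left.1 h.2.1 hw.end_mem
    have hsub₁ : G.neighborSet u₁ ∩ A ⊆ {w₁} := by
      rintro y ⟨hy, hyA⟩
      rcases hN₁ hy with rfl | rfl | rfl <;> simp_all
    have h₁ := h.insert_left_of_subset_singleton hu₁B hsub₁ hw₁
    refine ⟨_, _, Set.insert_comm u₁ u₂ S ▸ h₁.insert_right_of_subset_singleton (b := v) ?_ ?_⟩
    · rintro (rfl | h') <;> simp_all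
    · rintro y ⟨hy, hyB⟩
      rcases hN₂ hy with rfl | rfl | rfl <;> simp_all
  · have h₂ := h.insert_left_of_subset_singleton hu₂B hsub₂ hw₂
    have hsub₁ : G.neighborSet u₁ ∩ insert u₂ A ⊆ {u₂, w₁} := by
      rintro y ⟨hy, hyA⟩
      rcases hN₁ hy with rfl | rfl | rfl <;> simp_all
    refine ⟨_, _, h₂.insert_left_s10 (by simp_all) ?_ ?_ ?_⟩
    · exact (Set.ncard_le_ncard hsub₁).trans ((Set.ncard_insert_le _ _).trans (by simp))
    · refine Set.Pairwise.mono hsub₁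
        (Set.pairwise_pair.2 fun hne => ⟨fun hr => ?_, fun hr => ?_⟩)
      · exact hw (hr.of_insert hsub₂ hne.symm).symm
      · exact hw (hr.symm.of_insert hsub₂ hne.symm).symm
    · rintro y ⟨hy, rfl | hyA⟩
      · rw [degreeIn_insert_of_not_adj (G.loopless.irrefl _)]
        exact degreeIn_le_one_of_subset hsub₂
      · rcases hN₁ hy with rfl | rfl | rfl
        · exact absurd hyA hvA
        · exact absurd hyA hu₂A
        · rw [degreeIn_insert_of_not_adj fun h' => h₂₁ h'.symm]
          exact hw₁ hyA

theorem IsF2FPartOn.exists_insert_of_poor_triangle (h : IsF2FPartOn G S A B)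
    (hN₁ : G.neighborSet u₁ ⊆ {v, u₂, w₁}) (hN₂ : G.neighborSet u₂ ⊆ {v, u₁, w₂})
    (hu₁ : u₁ ∉ S) (hu₂ : u₂ ∉ S) (hu : u₁ ≠ u₂) (h₂₁ : ¬ G.Adj u₂ w₁) (hvS : v ∈ S)
    (hv : G.degreeIn S v ≤ 3) (hw₁ : G.degreeIn S w₁ ≤ 3) (hw₂ : G.degreeIn S w₂ ≤ 3) :
    ∃ A' B', IsF2FPartOn G (insert u₁ (insert u₂ S)) A' B' := by
  rw [← h.1] at hvS
  rcases hvS with hvA | hvB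
  · exact h.exists_insert_of_mem_left hN₁ hN₂ hu₁ hu₂ hu hvA hv
  obtain ⟨A₁, B₁, h₁, -, hB₁, hw₁'⟩ := h.exists_degreeIn_le_one hw₁
  obtain ⟨A₂, B₂, h₂, hA₂, hB₂, hw₂'⟩ := h₁.exists_degreeIn_le_one hw₂
  exact h₂.exists_insert_of_mem_right hN₁ hN₂ hu₁ hu₂ hu h₂₁ (hB₂ (hB₁ hvB))
    (fun hw => (degreeIn_mono hA₂).trans (hw₁' (hA₂ hw))) hw₂'

end PoorTriangle

theorem NoCycleLen.eq_of_adj_of_adj {a b c d : V} (h4 : NoCycleLen G 4) (hac : a ≠ c)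
    (hab : G.Adj a b) (hbc : G.Adj b c) (had : G.Adj a d) (hdc : G.Adj d c) : b = d := by
  by_contra hbd
  refine h4 a (.cons hab (.cons hbc (.cons hdc.symm (.cons had.symm .nil)))) ?_ rfl
  simp [Walk.cons_isCycle_iff, Walk.cons_isPath_iff, hab.ne.symm, hbc.ne, hdc.ne.symm, had.ne,
    had.ne.symm, hac, hac.symm, hbd]

theorem PlaneEmbedding.adj_of_faceLen_eq_three [Fintype V] [DecidableEq V] [DecidableRel G.Adj]
    (E : PlaneEmbedding G) {f : E.Face} (hf : E.faceLen f = 3) {x y : V}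
    (hx : E.IncidentVF x f) (hy : E.IncidentVF y f) (hxy : x ≠ y) : G.Adj x y := by
  obtain ⟨a, b, c, habc⟩ := List.length_eq_three.mp hf
  have hwalk : (E.boundary f ++ (E.boundary f).take 1).IsChain G.Adj := E.boundary_walk f
  simp only [IncidentVF, habc, List.mem_cons, List.not_mem_nil, or_false] at hx hy hwalk
  simp only [List.take_succ_cons, List.take_zero, List.cons_append, List.nil_append,
    List.isChain_cons_cons, List.isChain_singleton, and_true] at hwalk
  obtain ⟨hab, hbc, hca⟩ := hwalk
  rcases hx with rfl | rfl | rfl <;> rcases hy with rfl | rfl | rfl <;>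
    first | exact absurd rfl hxy | assumption | exact G.adj_symm ‹_›
end

theorem five_vertex_not_on_poor_face_general {V : Type} [Fintype V] [DecidableEq V]
    (G : SimpleGraph V) [DecidableRel G.Adj] (E : PlaneEmbedding G)
    (h4 : NoCycleLen G 4)
    (hno : ¬ ∃ V1 V2 : Set V, IsF2FPartOn G Set.univ V1 V2)
    (hmin : ∀ s : Set V, s ≠ Set.univ →
      ∃ V1 V2 : Set ↥s, IsF2FPartOn (G.induce s) Set.univ V1 V2) :
    ∀ v : V, G.degree v = 5 → ∀ f : E.Face, E.PoorFace f → ¬ E.IncidentVF v f := by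
  rintro v hv f ⟨hf, u₁, u₂, hu, ⟨hdu₁, hu₁f, w₁, hw₁, hw₁f, hdw₁⟩,
    ⟨hdu₂, hu₂f, w₂, hw₂, hw₂f, hdw₂⟩⟩ hvf
  have hvu₁ : v ≠ u₁ := by rintro rfl; omega
  have hvu₂ : v ≠ u₂ := by rintro rfl; omega
  have hv₁ := E.adj_of_faceLen_eq_three hf hvf hu₁f hvu₁
  have hv₂ := E.adj_of_faceLen_eq_three hf hvf hu₂f hvu₂
  have hu₁₂ := E.adj_of_faceLen_eq_three hf hu₁f hu₂f hu
  have hN₁ := neighborSet_eq_of_degree_eq_three hdu₁ hv₁.symm hu₁₂ hw₁ hvu₂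
    (ne_of_mem_of_not_mem hvf hw₁f) (ne_of_mem_of_not_mem hu₂f hw₁f)
  have hN₂ := neighborSet_eq_of_degree_eq_three hdu₂ hv₂.symm hu₁₂.symm hw₂ hvu₁
    (ne_of_mem_of_not_mem hvf hw₂f) (ne_of_mem_of_not_mem hu₁f hw₂f)
  have h₂₁ : ¬ G.Adj u₂ w₁ := fun h =>
    hu (h4.eq_of_adj_of_adj (ne_of_mem_of_not_mem hvf hw₁f) hv₁ hw₁ hv₂ h)
  set S : Set V := {u₁, u₂}ᶜ
  have hdegS : ∀ {x u}, G.Adj x u → u ∉ S → G.degreeIn S x + 1 ≤ G.degree x := fun hxu huS => by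
    simpa using degreeIn_add_ncard_le_degree (T := {_}) (by simpa using hxu)
      (Set.disjoint_singleton_right.2 huS)
  have hvS : G.degreeIn S v + 2 ≤ G.degree v := by
    simpa [Set.ncard_pair hu] using degreeIn_add_ncard_le_degree (S := S) (T := {u₁, u₂})
      (Set.insert_subset hv₁ (Set.singleton_subset_iff.2 hv₂)) disjoint_compl_left
  obtain ⟨V₁, V₂, hpart⟩ := hmin S fun h => (h ▸ Set.mem_univ u₁ : u₁ ∈ S) (by simp)
  obtain ⟨A, B, hAB⟩ := hpart.image_val.exists_insert_of_poor_triangle hN₁.le hN₂.le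
    (by simp [S]) (by simp [S]) hu h₂₁ (by simp [S, hvu₁, hvu₂]) (by omega)
    (by have := hdegS hw₁.symm (by simp [S]); omega)
    (by have := hdegS hw₂.symm (by simp [S]); omega)
  refine hno ⟨A, B, ?_⟩
  rwa [show insert u₁ (insert u₂ S) = Set.univ by ext; simp [S]; tauto] at hAB

theorem five_vertex_not_on_poor_face {V : Type} [Fintype V] [DecidableEq V]
    (G : SimpleGraph V) [DecidableRel G.Adj] (E : PlaneEmbedding G)
    (h4 : NoCycleLen G 4) (h6 : NoCycleLen G 6)
    (hno : ¬ ∃ V1 V2 : Set V, IsF2FPartOn G Set.univ V1 V2)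
    (hmin : ∀ s : Set V, s ≠ Set.univ →
      ∃ V1 V2 : Set ↥s, IsF2FPartOn (G.induce s) Set.univ V1 V2) :
    ∀ v : V, G.degree v = 5 → ∀ f : E.Face, E.PoorFace f → ¬ E.IncidentVF v f :=
  five_vertex_not_on_poor_face_general G E h4 hno hmin
end
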